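/- (Perfect Gold Standard — PPV) Under assumptions (A1), (A2), (A4) and the testing logic, if the established test has perfect sensitivity σ = 1, then for every distribution consistent with the data the new test's positive predictive value is point-identified: P(x=1|z=1,t=1) = P(y=1|z=1,t=1). -/
import Mathlib


/-!
Population model: a pmf `P` on `{0,1}^4` over `(x, y, z, t)` where `x = true` means truly
infected, `y` is the established test result, `z` the new test result, and `t = true` means
the person belongs to the testing pool.  The testing logic requires `z = 1 → t = 1`.
-/

namespace PaperTest

abbrev Dist := Bool → Bool → Bool → Bool → ℝ

/-- Probability of the event `A` under `P`. -/
noncomputable def pr (P : Dist) (A : Bool → Bool → Bool → Bool → Bool) : ℝ :=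
  ∑ x : Bool, ∑ y : Bool, ∑ z : Bool, ∑ t : Bool, if A x y z t then P x y z t else 0

/-- Conditional probability `P(A | B)`. -/
noncomputable def cpr (P : Dist) (A B : Bool → Bool → Bool → Bool → Bool) : ℝ :=
  pr P (fun x y z t => A x y z t && B x y z t) / pr P B

def IsPMF (P : Dist) : Prop :=
  (∀ x y z t, 0 ≤ P x y z t) ∧
    (∑ x : Bool, ∑ y : Bool, ∑ z : Bool, ∑ t : Bool, P x y z t) = 1

/-- Testing logic: `z = 1` implies `t = 1`, i.e. there is no mass on `z = 1 ∧ t = 0`. -/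
def TestLogic (P : Dist) : Prop := ∀ x y, P x y true false = 0

/-- Prevalence `p = P(x=1)`. -/
noncomputable def prev (P : Dist) : ℝ := pr P fun x _ _ _ => x

/-- Sensitivity of the established test, `σ = P(y=1 | x=1)`. -/
noncomputable def sens (P : Dist) : ℝ := cpr P (fun _ y _ _ => y) (fun x _ _ _ => x)

/-- `τ = P(t=1)`. -/
noncomputable def tau (P : Dist) : ℝ := pr P fun _ _ _ t => t

/-- `γ = P(y=1 | t=1)`. -/
noncomputable def gamma (P : Dist) : ℝ := cpr P (fun _ y _ _ => y) (fun _ _ _ t => t)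

/-- `ζ = P(z=1 | t=1)`. -/
noncomputable def zeta (P : Dist) : ℝ := cpr P (fun _ _ z _ => z) (fun _ _ _ t => t)

/-- `χ̄ = γ/σ`, the prevalence in the testing pool. -/
noncomputable def chibar (P : Dist) : ℝ := gamma P / sens P

/-- (A1) non-trivial prevalence. -/
def A1 (P : Dist) : Prop := 0 < prev P ∧ prev P < 1

/-- (A2) no false positives for the established test: `P(x=0, y=1) = 0`. -/
def A2 (P : Dist) : Prop := pr P (fun x y _ _ => !x && y) = 0

/-- (A3) test monotonicity: `P(x=1 | t=1) ≥ P(x=1 | t=0)`. -/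
def A3 (P : Dist) : Prop :=
  cpr P (fun x _ _ _ => x) (fun _ _ _ t => t) ≥ cpr P (fun x _ _ _ => x) (fun _ _ _ t => !t)

/-- (A4) health sufficiency: `P(y=1 | x=1, t=1) = P(y=1 | x=1) = σ`. -/
def A4 (P : Dist) : Prop := cpr P (fun _ y _ _ => y) (fun x _ _ t => x && t) = sens P

/-- `P(y=1, z=1 | t=1)`. -/
noncomputable def q11 (P : Dist) : ℝ := cpr P (fun _ y z _ => y && z) (fun _ _ _ t => t)

/-- `P(y=1, z=0 | t=1)`. -/
noncomputable def q10 (P : Dist) : ℝ := cpr P (fun _ y z _ => y && !z) (fun _ _ _ t => t)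

/-- `P(y=0, z=1 | t=1)`. -/
noncomputable def q01 (P : Dist) : ℝ := cpr P (fun _ y z _ => !y && z) (fun _ _ _ t => t)

/-- `P(y=0, z=0 | t=1)`. -/
noncomputable def q00 (P : Dist) : ℝ := cpr P (fun _ y z _ => !y && !z) (fun _ _ _ t => t)

/-- `Q` induces the same conditional data distribution `P(y, z | t=1)` and the same
sensitivity `σ` of the established test as `P`. -/
def SameData (P Q : Dist) : Prop :=
  (∀ y0 z0 : Bool,
      cpr Q (fun _ y z _ => (y == y0) && (z == z0)) (fun _ _ _ t => t) =
        cpr P (fun _ y z _ => (y == y0) && (z == z0)) (fun _ _ _ t => t)) ∧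
    sens Q = sens P

/-- Assumptions (A1), (A2), (A4), the testing logic, and the maintained regularity
conditions `γ, ζ > 0` and `P(t=1) > 0`. -/
def Setup (P : Dist) : Prop :=
  IsPMF P ∧ TestLogic P ∧ A1 P ∧ A2 P ∧ A4 P ∧
    0 < gamma P ∧ 0 < zeta P ∧ 0 < tau P

/-- `Q` is consistent with the data of `P`: it satisfies all assumptions and induces the
same `P(y, z | t=1)` and the same `σ`. -/
def Consistent (P Q : Dist) : Prop := Setup Q ∧ SameData P Q


lemma zeros (Q : Dist) (hpmf : IsPMF Q) (hA2 : A2 Q) (hs : sens Q = 1)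
    (hprev : 0 < prev Q) :
    ∀ z t, Q false true z t = 0 ∧ Q true false z t = 0 := by
  obtain ⟨h0, _⟩ := hpmf
  have hA2' := hA2
  simp [A2, pr, Fintype.sum_bool] at hA2'
  have hfy : ∀ z t, Q false true z t = 0 := by
    intro z t
    have a1 := h0 false true true true
    have a2 := h0 false true true false
    have a3 := h0 false true false true
    have a4 := h0 false true false false
    cases z <;> cases t <;> linarith
  -- sens Q = 1 :  pr(y&&x) = pr(x)
  have hprev' : 0 < pr Q (fun x _ _ _ => x) := hprev
  have hsens : pr Q (fun x y z t => (fun _ y _ _ => y) x y z t && (fun x _ _ _ => x) x y z t)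
      = pr Q (fun x _ _ _ => x) := by
    have := hs
    unfold sens cpr at this
    field_simp at this
    linarith [this]
  simp [pr, Fintype.sum_bool, hfy] at hsens
  have htf : ∀ z t, Q true false z t = 0 := by
    intro z t
    have a1 := h0 true false true true
    have a2 := h0 true false true false
    have a3 := h0 true false false true
    have a4 := h0 true false false false
    cases z <;> cases t <;> linarith
  exact fun z t => ⟨hfy z t, htf z t⟩

/-- Perfect Gold Standard — PPV: if the established test has perfect
sensitivity `σ = 1`, then for every distribution consistent with the data the new test's
positive predictive value is point-identified: `P(x=1 | z=1, t=1) = P(y=1 | z=1, t=1)`. -/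
theorem statement6 (P : Dist) (h : Setup P) (hσ : sens P = 1) :
    ∀ Q : Dist, Consistent P Q →
      cpr Q (fun x _ _ _ => x) (fun _ _ z t => z && t) =
        cpr P (fun _ y _ _ => y) (fun _ _ z t => z && t) := by
  rintro Q ⟨⟨hQpmf, hQtl, hQA1, hQA2, hQA4, hQγ, hQζ, hQτ⟩, hdata, hsens⟩
  obtain ⟨hPpmf, hPtl, hPA1, hPA2, hPA4, hPγ, hPζ, hPτ⟩ := h
  have hZQ := zeros Q hQpmf hQA2 (hsens.trans hσ) hQA1.1
  have hZP := zeros P hPpmf hPA2 hσ hPA1.1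
  have hQ1 : ∀ z t, Q false true z t = 0 := fun z t => (hZQ z t).1
  have hQ2 : ∀ z t, Q true false z t = 0 := fun z t => (hZQ z t).2
  have hP1 : ∀ z t, P false true z t = 0 := fun z t => (hZP z t).1
  have hP2 : ∀ z t, P true false z t = 0 := fun z t => (hZP z t).2
  have e11 := hdata true true
  have e01 := hdata false true
  have hτQ : (0:ℝ) < pr Q (fun _ _ _ t => t) := hQτ
  have hτP : (0:ℝ) < pr P (fun _ _ _ t => t) := hPτ
  have hζQ := hQζ
  have hζP := hPζ
  unfold cpr at e11 e01
  unfold zeta cpr at hζQ hζP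
  unfold pr at hτQ hτP
  simp [pr, Fintype.sum_bool, hQ1, hQ2, hP1, hP2] at e11 e01 hζQ hζP hτQ hτP ⊢
  rw [div_pos_iff] at hζQ hζP
  have hdQ : (0:ℝ) < Q true true true true + Q false false true true := by
    rcases hζQ with ⟨h1, _⟩ | ⟨_, h2⟩ <;> linarith
  have hdP : (0:ℝ) < P true true true true + P false false true true := by
    rcases hζP with ⟨h1, _⟩ | ⟨_, h2⟩ <;> linarith
  rw [div_eq_div_iff (by linarith) (by linarith)] at e11 e01
  unfold cpr
  simp [pr, Fintype.sum_bool, hQ1, hQ2, hP1, hP2]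
  rw [div_eq_div_iff (by linarith) (by linarith)]
  have key : (P true true true true + P true true false true +
        (P false false true true + P false false false true)) *
        (Q true true true true * P false false true true) =
      (P true true true true + P true true false true +
        (P false false true true + P false false false true)) *
        (P true true true true * Q false false true true) := by
    linear_combination P false false true true * e11 - P true true true true * e01
  have key2 := mul_left_cancel₀ (ne_of_gt hτP) key
  linear_combination key2

end PaperTest
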